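/- Let w1, w2 be coprime positive integers with w2 ≤ w1, and let n be a positive integer. Let (w1i, w2i) be positive integers with w1i/w2i → w1/w2 and w2i → ∞. Suppose (s1,s2) ∈ ℕ², (s1,s2) ≠ (n,n), and s3 ∈ ℕ satisfy w1i(s1 − n) + w2i(s2 − n) + s3 = 0 for all i. Then (s1−n)(s2−n) < 0, and writing g = gcd(|s1−n|, |s2−n|), one has (|s2−n|/g, |s1−n|/g) = (w1, w2), and (w1i, w2i) = (w11, w21) + c_i·(w1, w2) for some integer c_i for each i. -/
import Mathlib


open Filter

/-- If `w1i(s1 − n) + w2i(s2 − n) + s3 = 0` for all `i`, with `(s1,s2) ≠ (n,n)`,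
`w2i → ∞` and `w1i/w2i → w1/w2` for coprime `w2 ≤ w1`, then `(s1−n)(s2−n) < 0`,
`(|s2−n|/g, |s1−n|/g) = (w1, w2)` for `g = gcd(|s1−n|, |s2−n|)`, and
`(w1i, w2i) = (w11, w21) + c_i·(w1, w2)` for integers `c_i`. -/
theorem stmt9 (w1 w2 n : ℕ) (hw1 : 0 < w1) (hw2 : 0 < w2) (hn : 0 < n)
    (hcop : Nat.Coprime w1 w2) (hle : w2 ≤ w1)
    (w1i w2i : ℕ → ℕ) (hpos : ∀ i, 0 < w1i i ∧ 0 < w2i i)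
    (htend : Tendsto w2i atTop atTop)
    (hlim : Tendsto (fun i => (w1i i : ℝ) / (w2i i : ℝ)) atTop
      (nhds ((w1 : ℝ) / (w2 : ℝ))))
    (s1 s2 s3 : ℕ) (hne : (s1, s2) ≠ (n, n))
    (heq : ∀ i, (w1i i : ℤ) * ((s1 : ℤ) - n) + (w2i i : ℤ) * ((s2 : ℤ) - n) + (s3 : ℤ) = 0) :
    ((s1 : ℤ) - n) * ((s2 : ℤ) - n) < 0 ∧
    (((s2 : ℤ) - n).natAbs / Int.gcd ((s1 : ℤ) - n) ((s2 : ℤ) - n) = w1 ∧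
      ((s1 : ℤ) - n).natAbs / Int.gcd ((s1 : ℤ) - n) ((s2 : ℤ) - n) = w2) ∧
    ∀ i, ∃ c : ℤ, (w1i i : ℤ) = (w1i 0 : ℤ) + c * w1 ∧ (w2i i : ℤ) = (w2i 0 : ℤ) + c * w2 := by
  set a : ℤ := (s1 : ℤ) - n with ha
  set b : ℤ := (s2 : ℤ) - n with hb
  -- limit argument: w1*a + w2*b = 0
  have h2ne : ∀ i, ((w2i i : ℝ)) ≠ 0 := fun i => by
    have := (hpos i).2; positivity
  have htop : Tendsto (fun i => (w2i i : ℝ)) atTop atTop :=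
    tendsto_natCast_atTop_atTop.comp htend
  have hz : Tendsto (fun i => (s3 : ℝ) / (w2i i : ℝ)) atTop (nhds 0) :=
    tendsto_const_nhds.div_atTop htop
  have hA : Tendsto (fun i => (w1i i : ℝ) / (w2i i : ℝ) * (a : ℝ)) atTop
      (nhds ((w1 : ℝ) / (w2 : ℝ) * (a : ℝ))) := hlim.mul_const _
  have hf : ∀ i, (w1i i : ℝ) / (w2i i : ℝ) * (a : ℝ) = -(b : ℝ) - (s3 : ℝ) / (w2i i : ℝ) := by
    intro i
    have h := heq i
    have hR : (w1i i : ℝ) * (a : ℝ) + (w2i i : ℝ) * (b : ℝ) + (s3 : ℝ) = 0 := by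
      exact_mod_cast congrArg (Int.cast : ℤ → ℝ) h
    have h2 := h2ne i
    field_simp
    linarith [hR]
  have hB : Tendsto (fun i => -(b : ℝ) - (s3 : ℝ) / (w2i i : ℝ)) atTop
      (nhds (-(b : ℝ) - 0)) := tendsto_const_nhds.sub hz
  have hA' : Tendsto (fun i => -(b : ℝ) - (s3 : ℝ) / (w2i i : ℝ)) atTop
      (nhds ((w1 : ℝ) / (w2 : ℝ) * (a : ℝ))) := hA.congr hf
  have hkeyR : (w1 : ℝ) / (w2 : ℝ) * (a : ℝ) = -(b : ℝ) - 0 :=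
    tendsto_nhds_unique hA' hB
  have hw2R : (w2 : ℝ) ≠ 0 := by positivity
  have hkeyR' : (w1 : ℝ) * (a : ℝ) + (w2 : ℝ) * (b : ℝ) = 0 := by
    field_simp at hkeyR
    linarith [hkeyR]
  have hkey : (w1 : ℤ) * a + (w2 : ℤ) * b = 0 := by exact_mod_cast hkeyR'
  have hw1' : (w1 : ℤ) ≠ 0 := by exact_mod_cast hw1.ne'
  have hw2' : (w2 : ℤ) ≠ 0 := by exact_mod_cast hw2.ne'
  -- nonvanishing
  have hab0 : ¬ (a = 0 ∧ b = 0) := by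
    rintro ⟨h1, h2⟩
    apply hne
    have e1 : s1 = n := by omega
    have e2 : s2 = n := by omega
    simp [e1, e2]
  have hbne : b ≠ 0 := by
    intro h
    have : a = 0 := by
      have h' := hkey; rw [h, mul_zero, add_zero, mul_eq_zero] at h'
      tauto
    exact hab0 ⟨this, h⟩
  have hane : a ≠ 0 := by
    intro h
    have : b = 0 := by
      have h' := hkey; rw [h, mul_zero, zero_add, mul_eq_zero] at h'
      tauto
    exact hab0 ⟨h, this⟩
  have hprod : a * b < 0 := by
    have hb2 : 0 < b * b := mul_self_pos.mpr hbne
    nlinarith [hkey, (show (0:ℤ) < (w1:ℤ) from by exact_mod_cast hw1),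
      (show (0:ℤ) < (w2:ℤ) from by exact_mod_cast hw2)]
  refine ⟨hprod, ?_, ?_⟩
  · -- gcd part
    have habs : w1 * a.natAbs = w2 * b.natAbs := by
      have h1 : ((w1:ℤ) * a).natAbs = ((w2:ℤ) * b).natAbs := by
        have : (w1:ℤ) * a = -((w2:ℤ) * b) := by linarith [hkey]
        rw [this, Int.natAbs_neg]
      simpa [Int.natAbs_mul] using h1
    have hd : w1 ∣ b.natAbs := by
      have : w1 ∣ w2 * b.natAbs := ⟨a.natAbs, habs.symm⟩
      exact (Nat.Coprime.dvd_of_dvd_mul_left hcop this)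
    obtain ⟨k, hk⟩ := hd
    have hA : a.natAbs = w2 * k := by
      have : w1 * a.natAbs = w1 * (w2 * k) := by rw [habs, hk]; ring
      exact Nat.eq_of_mul_eq_mul_left hw1 this
    have hkne : 0 < k :=
      Nat.pos_of_ne_zero fun h => (Int.natAbs_ne_zero.mpr hbne) (by simp [hk, h])
    have hg : Int.gcd a b = k := by
      show Nat.gcd a.natAbs b.natAbs = k
      rw [hA, hk, Nat.gcd_mul_right, Nat.Coprime.gcd_eq_one hcop.symm, one_mul]
    rw [hg, hk, hA]
    exact ⟨Nat.mul_div_cancel _ hkne, Nat.mul_div_cancel _ hkne⟩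
  · -- linear family
    intro i
    have hdiff : ((w1i i : ℤ) - w1i 0) * a + ((w2i i : ℤ) - w2i 0) * b = 0 := by
      have h1 := heq i; have h0 := heq 0; ring_nf; ring_nf at h1 h0; linarith
    -- w2 * Δ1 = w1 * Δ2
    have hrel : (w2 : ℤ) * ((w1i i : ℤ) - w1i 0) = (w1 : ℤ) * ((w2i i : ℤ) - w2i 0) := by
      have hmul : a * ((w2:ℤ) * ((w1i i : ℤ) - w1i 0) - (w1:ℤ) * ((w2i i : ℤ) - w2i 0)) = 0 := by
        nlinarith [hdiff, hkey]
      rcases mul_eq_zero.mp hmul with h | h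
      · exact absurd h hane
      · linarith
    have hicop : IsCoprime (w1 : ℤ) (w2 : ℤ) := Int.isCoprime_iff_gcd_eq_one.mpr hcop
    have hdvd : (w1 : ℤ) ∣ ((w1i i : ℤ) - w1i 0) := by
      have : (w1 : ℤ) ∣ (w2 : ℤ) * ((w1i i : ℤ) - w1i 0) := ⟨_, hrel⟩
      rw [mul_comm] at this
      exact hicop.dvd_of_dvd_mul_right this
    obtain ⟨c, hc⟩ := hdvd
    refine ⟨c, by linarith [hc], ?_⟩
    have : (w1 : ℤ) * ((w2i i : ℤ) - w2i 0) = (w1 : ℤ) * (c * w2) := by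
      rw [← hrel, hc]; ring
    have := mul_left_cancel₀ hw1' this
    linarith
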